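/- Let G = ⟨a, b | a²b⁻²ab⁻²a²ba²baba²b = 1⟩, μ = b⁻²ab⁻²ab⁻¹, λ = a⁻²b⁻¹a⁻²b. For every left-ordering ≺ of G, if μ⁻¹λ ≺ 1 then μ⁻ⁿλ ≺ 1 for all integers n ≥ 1. -/

import Mathlib

/-- The single relator `a²b⁻²ab⁻²a²ba²baba²b` of the presentation of `π₁(v2503)`,
with `a`, `b` the generators of the free group on two letters. -/
def rel2503 : FreeGroup (Fin 2) :=
  let a : FreeGroup (Fin 2) := FreeGroup.of 0
  let b : FreeGroup (Fin 2) := FreeGroup.of 1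
  a ^ 2 * b⁻¹ ^ 2 * a * b⁻¹ ^ 2 * a ^ 2 * b * a ^ 2 * b * a * b * a ^ 2 * b

/-- The fundamental group of `v2503`: `⟨a, b | a²b⁻²ab⁻²a²ba²baba²b = 1⟩`. -/
abbrev G2503 : Type := PresentedGroup ({rel2503} : Set (FreeGroup (Fin 2)))

/-- The generator `a`. -/
def ga : G2503 := PresentedGroup.of 0
/-- The generator `b`. -/
def gb : G2503 := PresentedGroup.of 1

/-- `x = b⁻²a`. -/
def gx : G2503 := gb⁻¹ ^ 2 * ga
/-- `y = ba²`. -/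
def gy : G2503 := gb * ga ^ 2
/-- The homological meridian `μ = b⁻²ab⁻²ab⁻¹`. -/
def gmu : G2503 := gb⁻¹ ^ 2 * ga * gb⁻¹ ^ 2 * ga * gb⁻¹
/-- The homological longitude `λ = a⁻²b⁻¹a⁻²b`. -/
def glam : G2503 := ga⁻¹ ^ 2 * gb⁻¹ * ga⁻¹ ^ 2 * gb

/-!
Since `μ⁻ⁿλ = μ⁻⁽ⁿ⁻¹⁾ · μ⁻¹λ`, it suffices to show `1 ≤ μ`; we split on the signs of `a` and `b`.
Conjugating the relator by `a²` gives `μ⁻¹ = baba²baba²ba²`, hence `μ⁻¹λ = baba²bab²`. So `μ` is a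
product of copies of `a⁻¹, b⁻¹`, and by definition one of `a, b⁻¹`, while `μ⁻¹λ` is one of `a, b`:
this settles three of the four cases. If `a ≤ 1 ≤ b` and `μ < 1`, then `λ = μ · μ⁻¹λ < 1`, but the
identity `λ b⁻²a λ b⁻¹a² (μ⁻¹λ) b⁻²a = 1` writes `λ` as a product of elements `≥ 1`.
-/

theorem zpow_neg_mul_lt_one_of_inv_mul_lt_one {G : Type*} [Group G] [PartialOrder G]
    [MulLeftStrictMono G] {g h : G} (hg : 1 ≤ g) (hgh : g⁻¹ * h < 1) :
    ∀ n : ℤ, 1 ≤ n → g ^ (-n) * h < 1 := by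
  have := mulLeftMono_of_mulLeftStrictMono G
  intro n hn
  induction n, hn using Int.leInduction with
  | base => simpa using hgh
  | succ n _ ih =>
    rw [show g ^ (-(n + 1)) * h = g⁻¹ * (g ^ (-n) * h) by group]
    exact mul_lt_one_of_le_of_lt (inv_le_one'.mpr hg) ih

theorem relator_eq_one :
    ga ^ 2 * gb⁻¹ ^ 2 * ga * gb⁻¹ ^ 2 * ga ^ 2 * gb * ga ^ 2 * gb * ga * gb * ga ^ 2 * gb = 1 :=
  PresentedGroup.one_of_mem rfl

theorem gmu_eq_prod_ainv_binv :
    gmu = [ga⁻¹, ga⁻¹, gb⁻¹, ga⁻¹, ga⁻¹, gb⁻¹, ga⁻¹, gb⁻¹, ga⁻¹, ga⁻¹, gb⁻¹, ga⁻¹, gb⁻¹].prod := by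
  calc gmu = ga⁻¹ ^ 2 *
        (ga ^ 2 * gb⁻¹ ^ 2 * ga * gb⁻¹ ^ 2 * ga ^ 2 * gb * ga ^ 2 * gb * ga * gb * ga ^ 2 * gb) *
        ga ^ 2 * (ga⁻¹ ^ 2 * gb⁻¹ * ga⁻¹ ^ 2 * gb⁻¹ * ga⁻¹ * gb⁻¹ * ga⁻¹ ^ 2 * gb⁻¹ * ga⁻¹ * gb⁻¹) := by
        rw [gmu]; group
    _ = _ := by rw [relator_eq_one]; simp only [List.prod_cons, List.prod_nil]; group

theorem gmu_eq_prod_a_binv : gmu = [gb⁻¹, gb⁻¹, ga, gb⁻¹, gb⁻¹, ga, gb⁻¹].prod := by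
  simp only [gmu, List.prod_cons, List.prod_nil]; group

theorem gmu_inv_mul_glam_eq_prod_a_b :
    gmu⁻¹ * glam = [gb, ga, gb, ga, ga, gb, ga, gb, gb].prod := by
  rw [← mul_inv_eq_one, gmu_eq_prod_ainv_binv]
  simp only [glam, List.prod_cons, List.prod_nil]
  group

theorem glam_eq_prod_ainv_b :
    glam = [ga⁻¹, gb, gb, (gmu⁻¹ * glam)⁻¹, ga⁻¹, ga⁻¹, gb, glam⁻¹, ga⁻¹, gb, gb].prod := by
  rw [gmu_inv_mul_glam_eq_prod_a_b]
  simp only [glam, List.prod_cons, List.prod_nil]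
  group

theorem one_le_gmu [LinearOrder G2503] [MulLeftStrictMono G2503] (h : gmu⁻¹ * glam < 1) :
    1 ≤ gmu := by
  have := mulLeftMono_of_mulLeftStrictMono G2503
  rcases le_total ga 1 with ha | ha <;> rcases le_total gb 1 with hb | hb
  · rw [gmu_eq_prod_ainv_binv]
    exact List.one_le_prod_of_one_le (by simp [ha, hb])
  · by_contra! hmu
    have hlam : glam < 1 := by simpa using Left.mul_lt_one hmu h
    have : 1 ≤ glam := by
      rw [glam_eq_prod_ainv_b]
      exact List.one_le_prod_of_one_le (by simp [ha, hb, hlam.le, h.le, -mul_inv_rev])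
    exact hlam.not_ge this
  · rw [gmu_eq_prod_a_binv]
    exact List.one_le_prod_of_one_le (by simp [ha, hb])
  · refine absurd h (not_lt.mpr ?_)
    rw [gmu_inv_mul_glam_eq_prod_a_b]
    exact List.one_le_prod_of_one_le (by simp [ha, hb])

/-- Lemma 3.1: for every left-ordering of `π₁(v2503)`, if `μ⁻¹λ ≺ 1` then
`μ⁻ⁿλ ≺ 1` for all integers `n ≥ 1`. -/
theorem mu_pow_lam_neg [LinearOrder G2503] [CovariantClass G2503 G2503 (· * ·) (· < ·)]
    (h : gmu⁻¹ * glam < 1) : ∀ n : ℤ, 1 ≤ n → gmu ^ (-n) * glam < 1 :=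
  zpow_neg_mul_lt_one_of_inv_mul_lt_one (one_le_gmu h) h
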